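/- Let μ(ρ) = αρ with α > 0 and define φ by φ'(ρ) = 2μ(ρ)/ρ² = 2α/ρ. Suppose (ρ, u) is a smooth positive solution of the radial system ρ_t + (ρu)_r + mρu/r = 0 and ρ(u_t + u u_r) + P_r − 2α(ρ(u_r + (m/r)u))_r + 2αm ρ_r u / r = 0 with P = Aρ^γ. Then the effective velocity v = u + φ(ρ)_r = u + 2α ρ_r/ρ satisfies ρ(v_t + u v_r) + P_r = 0, equivalently v_t + u v_r + (Aγ/(2α)) ρ^{γ−1} v − (Aγ/(2α)) ρ^{γ−1} u = 0. -/

import Mathlib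

open Function

variable {f : ℝ → ℝ → ℝ}

lemma pd_snd (hf : ContDiff ℝ (⊤ : ℕ∞) (uncurry f)) (t r : ℝ) :
    HasDerivAt (fun y => f t y) (fderiv ℝ (uncurry f) (t, r) (0, 1)) r := by
  have h : HasFDerivAt (uncurry f) (fderiv ℝ (uncurry f) (t, r)) (t, r) :=
    (hf.differentiable (by simp) (t, r)).hasFDerivAt
  have h2 : HasDerivAt (fun y : ℝ => ((t, y) : ℝ × ℝ)) ((0 : ℝ), (1 : ℝ)) r :=
    (hasDerivAt_const r t).prodMk (hasDerivAt_id r)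
  exact (h.comp_hasDerivAt r h2)

lemma pd_fst (hf : ContDiff ℝ (⊤ : ℕ∞) (uncurry f)) (t r : ℝ) :
    HasDerivAt (fun s => f s r) (fderiv ℝ (uncurry f) (t, r) (1, 0)) t := by
  have h : HasFDerivAt (uncurry f) (fderiv ℝ (uncurry f) (t, r)) (t, r) :=
    (hf.differentiable (by simp) (t, r)).hasFDerivAt
  have h2 : HasDerivAt (fun s : ℝ => ((s, r) : ℝ × ℝ)) ((1 : ℝ), (0 : ℝ)) t :=
    (hasDerivAt_id t).prodMk (hasDerivAt_const t r)
  exact (h.comp_hasDerivAt t h2)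

lemma smooth_pd (hf : ContDiff ℝ (⊤ : ℕ∞) (uncurry f)) (v : ℝ × ℝ) :
    ContDiff ℝ (⊤ : ℕ∞) (fun p : ℝ × ℝ => fderiv ℝ (uncurry f) p v) :=
  (hf.fderiv_right (by simp)).clm_apply contDiff_const

lemma diff_pr_snd (hf : ContDiff ℝ (⊤ : ℕ∞) (uncurry f)) (t r : ℝ) :
    DifferentiableAt ℝ (fun y => deriv (fun z => f t z) y) r := by
  have e : (fun y => deriv (fun z => f t z) y)
      = (fun p : ℝ × ℝ => fderiv ℝ (uncurry f) p (0, 1)) ∘ (fun y : ℝ => (t, y)) := by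
    funext y; exact (pd_snd hf t y).deriv
  rw [e]
  exact (((smooth_pd hf (0, 1)).comp
    (contDiff_const.prodMk contDiff_id)).differentiable (by simp)).differentiableAt

lemma diff_pr_fst (hf : ContDiff ℝ (⊤ : ℕ∞) (uncurry f)) (t r : ℝ) :
    DifferentiableAt ℝ (fun s => deriv (fun y => f s y) r) t := by
  have e : (fun s => deriv (fun y => f s y) r)
      = (fun p : ℝ × ℝ => fderiv ℝ (uncurry f) p (0, 1)) ∘ (fun s : ℝ => (s, r)) := by
    funext s; exact (pd_snd hf s r).deriv
  rw [e]
  exact (((smooth_pd hf (0, 1)).comp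
    (contDiff_id.prodMk contDiff_const)).differentiable (by simp)).differentiableAt

lemma mixed_swap (hf : ContDiff ℝ (⊤ : ℕ∞) (uncurry f)) (t r : ℝ) :
    deriv (fun s => deriv (fun y => f s y) r) t
      = deriv (fun y => deriv (fun s => f s y) t) r := by
  set F := uncurry f with hF
  set f' := fderiv ℝ F with hf'
  have hdf : ∀ y, HasFDerivAt F (f' y) y := fun y =>
    (hf.differentiable (by simp) y).hasFDerivAt
  have hdf' : HasFDerivAt f' (fderiv ℝ f' (t, r)) (t, r) :=
    (((hf.fderiv_right (m := (⊤ : ℕ∞)) (by simp)).differentiable (by simp)) (t, r)).hasFDerivAt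
  set f'' := fderiv ℝ f' (t, r) with hf''
  have sym := second_derivative_symmetric hdf hdf' (0, 1) (1, 0)
  have key : ∀ v : ℝ × ℝ, HasFDerivAt (fun p => f' p v) (f''.flip v) (t, r) := by
    intro v
    have := hdf'.clm_apply (hasFDerivAt_const v (t, r))
    simpa using this
  have L : deriv (fun s => deriv (fun y => f s y) r) t = f'' (1, 0) (0, 1) := by
    have e : (fun s => deriv (fun y => f s y) r) = fun s => f' (s, r) (0, 1) := by
      funext s; exact (pd_snd hf s r).deriv
    rw [e]
    have h2 : HasDerivAt (fun s : ℝ => ((s, r) : ℝ × ℝ)) ((1 : ℝ), (0 : ℝ)) t :=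
      (hasDerivAt_id t).prodMk (hasDerivAt_const t r)
    have := ((key (0, 1)).comp_hasDerivAt t h2)
    exact this.deriv
  have R : deriv (fun y => deriv (fun s => f s y) t) r = f'' (0, 1) (1, 0) := by
    have e : (fun y => deriv (fun s => f s y) t) = fun y => f' (t, y) (1, 0) := by
      funext y; exact (pd_fst hf t y).deriv
    rw [e]
    have h2 : HasDerivAt (fun y : ℝ => ((t, y) : ℝ × ℝ)) ((0 : ℝ), (1 : ℝ)) r :=
      (hasDerivAt_const r t).prodMk (hasDerivAt_id r)
    have := ((key (1, 0)).comp_hasDerivAt r h2)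
    exact this.deriv
  rw [L, R, sym]

/-- Derivation of the damped transport equation (3.10) for the effective velocity
`v = u + 2α ρ_r/ρ` (with `μ(ρ) = αρ`, `φ'(ρ) = 2α/ρ`): for a smooth positive
solution of the radial system, `ρ(v_t + u v_r) + P_r = 0`, equivalently
`v_t + u v_r + (Aγ/(2α)) ρ^{γ−1} v − (Aγ/(2α)) ρ^{γ−1} u = 0`. -/
theorem stmt_17 (m : ℕ) (A γ α : ℝ) (hA : 0 < A) (hγ : 1 < γ) (hα : 0 < α)
    (ρ u : ℝ → ℝ → ℝ)
    (hρ : ContDiff ℝ (⊤ : ℕ∞) (Function.uncurry ρ)) (hu : ContDiff ℝ (⊤ : ℕ∞) (Function.uncurry u))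
    (hρpos : ∀ t r, 0 < ρ t r)
    (hpde1 : ∀ t : ℝ, ∀ r > (0:ℝ),
      deriv (fun s => ρ s r) t + deriv (fun y => ρ t y * u t y) r
        + m * ρ t r * u t r / r = 0)
    (hpde2 : ∀ t : ℝ, ∀ r > (0:ℝ),
      ρ t r * (deriv (fun s => u s r) t + u t r * deriv (fun y => u t y) r)
        + deriv (fun y => A * ρ t y ^ γ) r
        - 2*α * deriv (fun y => ρ t y * (deriv (fun z => u t z) y + (m / y) * u t y)) r
        + 2*α*m * deriv (fun y => ρ t y) r * u t r / r = 0) :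
    ∀ t : ℝ, ∀ r > (0:ℝ),
      (ρ t r * (deriv (fun s => u s r + 2*α * deriv (fun y => ρ s y) r / ρ s r) t
          + u t r * deriv (fun y => u t y + 2*α * deriv (fun z => ρ t z) y / ρ t y) r)
        + deriv (fun y => A * ρ t y ^ γ) r = 0) ∧
      (deriv (fun s => u s r + 2*α * deriv (fun y => ρ s y) r / ρ s r) t
        + u t r * deriv (fun y => u t y + 2*α * deriv (fun z => ρ t z) y / ρ t y) r
        + (A*γ/(2*α)) * ρ t r ^ (γ-1) * (u t r + 2*α * deriv (fun y => ρ t y) r / ρ t r)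
        - (A*γ/(2*α)) * ρ t r ^ (γ-1) * u t r = 0) := by
  intro t r hr
  have ha : ρ t r ≠ 0 := (hρpos t r).ne'
  have hrne : r ≠ 0 := hr.ne'
  -- basic partial derivatives as HasDerivAt with deriv values
  have Hρy : ∀ y, HasDerivAt (fun z => ρ t z) (deriv (fun z => ρ t z) y) y := fun y =>
    (pd_snd hρ t y).differentiableAt.hasDerivAt
  have Huy : ∀ y, HasDerivAt (fun z => u t z) (deriv (fun z => u t z) y) y := fun y =>
    (pd_snd hu t y).differentiableAt.hasDerivAt
  have Hρt : HasDerivAt (fun s => ρ s r) (deriv (fun s => ρ s r) t) t :=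
    (pd_fst hρ t r).differentiableAt.hasDerivAt
  have Hut : HasDerivAt (fun s => u s r) (deriv (fun s => u s r) t) t :=
    (pd_fst hu t r).differentiableAt.hasDerivAt
  have Hρrr : HasDerivAt (fun y => deriv (fun z => ρ t z) y)
      (deriv (fun y => deriv (fun z => ρ t z) y) r) r :=
    (diff_pr_snd hρ t r).hasDerivAt
  have Hurr : HasDerivAt (fun y => deriv (fun z => u t z) y)
      (deriv (fun y => deriv (fun z => u t z) y) r) r :=
    (diff_pr_snd hu t r).hasDerivAt
  have Hρrt : HasDerivAt (fun s => deriv (fun y => ρ s y) r)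
      (deriv (fun s => deriv (fun y => ρ s y) r) t) t :=
    (diff_pr_fst hρ t r).hasDerivAt
  -- abbreviations
  set a := ρ t r with hadef
  set b := u t r with hbdef
  set ar := deriv (fun y => ρ t y) r with hardef
  set at' := deriv (fun s => ρ s r) t with hatdef
  set br := deriv (fun y => u t y) r with hbrdef
  set bt := deriv (fun s => u s r) t with hbtdef
  set arr := deriv (fun y => deriv (fun z => ρ t z) y) r with harrdef
  set brr := deriv (fun y => deriv (fun z => u t z) y) r with hbrrdef
  set art := deriv (fun s => deriv (fun y => ρ s y) r) t with hartdef
  -- pressure derivative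
  have ePr : deriv (fun y => A * ρ t y ^ γ) r = A * (ar * γ * a ^ (γ - 1)) := by
    have h1 : HasDerivAt (fun y => ρ t y ^ γ) (ar * γ * a ^ (γ - 1)) r :=
      (Hρy r).rpow_const (Or.inl ha)
    exact (h1.const_mul A).deriv
  -- continuity equation at (t, r)
  have e0 : at' + (ar * b + a * br) + ↑m * a * b / r = 0 := by
    have := hpde1 t r hr
    rwa [show deriv (fun y => ρ t y * u t y) r = _ from ((Hρy r).mul (Huy r)).deriv] at this
  -- mixed derivative via Schwarz + differentiated continuity equation
  have e1 : art = -(arr * b + ar * br + (ar * br + a * brr))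
      - ((↑m * ar * b + ↑m * a * br) * r - ↑m * a * b * 1) / r ^ 2 := by
    have swap := mixed_swap hρ t r
    have hev : (fun y => deriv (fun s => ρ s y) t)
        =ᶠ[nhds r] (fun y => -(deriv (fun z => ρ t z) y * u t y
            + ρ t y * deriv (fun z => u t z) y) - ↑m * ρ t y * u t y / y) := by
      filter_upwards [Ioi_mem_nhds hr] with y hy
      have h1 := hpde1 t y hy
      rw [show deriv (fun y => ρ t y * u t y) y = _ from ((Hρy y).mul (Huy y)).deriv] at h1
      linarith
    have hD : HasDerivAt (fun y => -(deriv (fun z => ρ t z) y * u t y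
        + ρ t y * deriv (fun z => u t z) y) - ↑m * ρ t y * u t y / y)
        (-(arr * b + ar * br + (ar * br + a * brr))
          - ((↑m * ar * b + ↑m * a * br) * r - ↑m * a * b * 1) / r ^ 2) r := by
      have h1 : HasDerivAt (fun y => deriv (fun z => ρ t z) y * u t y
          + ρ t y * deriv (fun z => u t z) y)
          (arr * b + ar * br + (ar * br + a * brr)) r :=
        (Hρrr.mul (Huy r)).add ((Hρy r).mul Hurr)
      have h2 : HasDerivAt (fun y => ↑m * ρ t y * u t y)
          (↑m * ar * b + ↑m * a * br) r := by
        exact (((Hρy r).const_mul (m:ℝ)).mul (Huy r))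
      have h3 := h2.div (hasDerivAt_id r) hrne
      exact h1.neg.sub h3
    rw [hartdef, swap, hev.deriv_eq, hD.deriv]
  -- momentum equation at (t, r), with the viscous derivative computed
  have e2 : a * (bt + b * br) + A * (ar * γ * a ^ (γ - 1))
      - 2*α * (ar * (br + ↑m / r * b)
          + a * (brr + ((0 * r - ↑m * 1) / r ^ 2 * b + ↑m / r * br)))
      + 2*α*↑m * ar * b / r = 0 := by
    have h2 := hpde2 t r hr
    have hg : HasDerivAt (fun y => ρ t y * (deriv (fun z => u t z) y + ↑m / y * u t y))
        (ar * (br + ↑m / r * b)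
          + a * (brr + ((0 * r - ↑m * 1) / r ^ 2 * b + ↑m / r * br))) r := by
      have hmy : HasDerivAt (fun y : ℝ => (↑m : ℝ) / y) ((0 * r - ↑m * 1) / r ^ 2) r :=
        (hasDerivAt_const r (m:ℝ)).div (hasDerivAt_id r) hrne
      exact (Hρy r).mul (Hurr.add (hmy.mul (Huy r)))
    rwa [hg.deriv, ePr] at h2
  -- effective velocity derivatives
  have evt : deriv (fun s => u s r + 2*α * deriv (fun y => ρ s y) r / ρ s r) t
      = bt + ((2*α * art) * a - 2*α * ar * at') / a ^ 2 := by
    have hq : HasDerivAt (fun s => 2*α * deriv (fun y => ρ s y) r / ρ s r)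
        (((2*α * art) * a - 2*α * ar * at') / a ^ 2) t :=
      (Hρrt.const_mul (2*α)).div Hρt ha
    exact (Hut.add hq).deriv
  have evr : deriv (fun y => u t y + 2*α * deriv (fun z => ρ t z) y / ρ t y) r
      = br + ((2*α * arr) * a - 2*α * ar * ar) / a ^ 2 := by
    have hq : HasDerivAt (fun y => 2*α * deriv (fun z => ρ t z) y / ρ t y)
        (((2*α * arr) * a - 2*α * ar * ar) / a ^ 2) r :=
      (Hρrr.const_mul (2*α)).div (Hρy r) ha
    exact ((Huy r).add hq).deriv
  have goal1 : a * ((bt + ((2*α * art) * a - 2*α * ar * at') / a ^ 2)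
      + b * (br + ((2*α * arr) * a - 2*α * ar * ar) / a ^ 2))
      + A * (ar * γ * a ^ (γ - 1)) = 0 := by
    have e0' : at' = -(ar * b + a * br) - ↑m * a * b / r := by linarith
    have E2 : (a * (bt + b * br) + A * (ar * γ * a ^ (γ - 1))) * r ^ 2
        - 2*α * (ar * (br * r + ↑m * b) * r + a * (brr * r ^ 2 + (↑m * br * r - ↑m * b)))
        + 2*α*↑m * ar * b * r = 0 := by
      have hmul : (a * (bt + b * br) + A * (ar * γ * a ^ (γ - 1))) * r ^ 2
          - 2*α * (ar * (br * r + ↑m * b) * r + a * (brr * r ^ 2 + (↑m * br * r - ↑m * b)))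
          + 2*α*↑m * ar * b * r
          = r ^ 2 * (a * (bt + b * br) + A * (ar * γ * a ^ (γ - 1))
            - 2*α * (ar * (br + ↑m / r * b)
                + a * (brr + ((0 * r - ↑m * 1) / r ^ 2 * b + ↑m / r * br)))
            + 2*α*↑m * ar * b / r) := by
        field_simp
        ring
      rw [hmul, e2, mul_zero]
    rw [e1, e0']
    linear_combination (norm := skip) (1 / r ^ 2) * E2
    field_simp
    ring
  constructor
  · rw [evt, evr, ePr]; exact goal1
  · rw [evt, evr]
    have h := goal1
    linear_combination (norm := skip) (1 / a) * h
    field_simp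
    ring
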